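/- arXiv:2601.14873 — 8 statements merged into one kernel-verified Lean document; each statement's English description precedes it below -/
import Mathlib

section
/- Let A be a unital C*-algebra, t ∈ [0,1], and α a complex number with |α|² = t(1−t). In the 2×2 matrix algebra M₂(A), let p be the matrix with entries p₁₁ = 1 and all other entries 0, and let q be the matrix with q₁₁ = t·1, q₁₂ = α·1, q₂₁ = α*·1, q₂₂ = (1−t)·1. Then the element q + (1/2)(1−q) − (1/(2−t))p is positive. -/
/-!
All entries are scalar, and the matrix equals `vᴴ v / (2 (2 - t))` for the row `v = (ᾱ, 2 - t)`:
the top-left entry `(1 + t) / 2 - 1 / (2 - t) = t (1 - t) / (2 (2 - t))` is `|α|² / (2 (2 - t))`.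
So it is of the form `rᴴ r` already over `ℂ`, and the unital `*`-homomorphism `ℂ → A` carries
such a factorization to `M₂(A)`.
-/

open Matrix

/-- A matrix over a C*-algebra is positive iff it is of the form `rᴴ * r`. -/
def MatIsPos {A : Type*} [CStarAlgebra A] (m : Matrix (Fin 2) (Fin 2) A) : Prop :=
  ∃ r : Matrix (Fin 2) (Fin 2) A, m = r.conjTranspose * r

theorem MatIsPos.map {A B F : Type*} [CStarAlgebra A] [CStarAlgebra B] [FunLike F A B]
    [NonUnitalRingHomClass F A B] [StarHomClass F A B] {m : Matrix (Fin 2) (Fin 2) A}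
    (hm : MatIsPos m) (f : F) : MatIsPos (m.map f) := by
  obtain ⟨r, rfl⟩ := hm
  exact ⟨r.map f, by rw [Matrix.map_mul, conjTranspose_map f (map_star f)]⟩

/-- The projection `q` of the statement, with scalar entries. -/
noncomputable def projQ (t : ℝ) (α : ℂ) : Matrix (Fin 2) (Fin 2) ℂ :=
  !![(t : ℂ), α; starRingEnd ℂ α, ((1 - t : ℝ) : ℂ)]

theorem matIsPos_projQ_combination (t : ℝ) (ht : t < 2) (α : ℂ) (hα : ‖α‖ ^ 2 = t * (1 - t)) :
    MatIsPos (projQ t α + (1 / 2 : ℝ) • (1 - projQ t α) - (1 / (2 - t) : ℝ) • !![1, 0; 0, 0]) := by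
  have h2t : (2 - t : ℂ) ≠ 0 := by
    rw [← Complex.ofReal_ofNat, ← Complex.ofReal_sub, Complex.ofReal_ne_zero]
    linarith
  have hαα : α * starRingEnd ℂ α = t * (1 - t) := by
    rw [Complex.mul_conj, Complex.normSq_eq_norm_sq, hα]
    push_cast
    ring
  set c : ℝ := √(2 * (2 - t))
  have hc : (c : ℂ) * c = 2 * (2 - t) := by
    norm_cast
    exact Real.mul_self_sqrt (by linarith)
  refine ⟨!![starRingEnd ℂ α / c, (2 - t) / c; 0, 0], ?_⟩
  ext i j
  fin_cases i <;> fin_cases j <;>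
    simp [projQ, mul_apply, Fin.sum_univ_two, one_apply, div_mul_div_comm, hc, hαα, map_ofNat] <;>
    field_simp <;> ring

theorem projQ_combination_map_algebraMap {A : Type*} [CStarAlgebra A] (t : ℝ) (α : ℂ) :
    (projQ t α + (1 / 2 : ℝ) • (1 - projQ t α) - (1 / (2 - t) : ℝ) • !![1, 0; 0, 0]).map
        (algebraMap ℂ A) =
      !![algebraMap ℂ A (t : ℂ), algebraMap ℂ A α;
          algebraMap ℂ A (starRingEnd ℂ α), algebraMap ℂ A ((1 - t : ℝ) : ℂ)]
        + (1 / 2 : ℝ) • ((1 : Matrix (Fin 2) (Fin 2) A) -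
            !![algebraMap ℂ A (t : ℂ), algebraMap ℂ A α;
              algebraMap ℂ A (starRingEnd ℂ α), algebraMap ℂ A ((1 - t : ℝ) : ℂ)])
        - (1 / (2 - t) : ℝ) • (!![1, 0; 0, 0] : Matrix (Fin 2) (Fin 2) A) := by
  let φ := ((Algebra.ofId ℂ A).restrictScalars ℝ).mapMatrix (m := Fin 2)
  have hφ (M : Matrix (Fin 2) (Fin 2) ℂ) : φ M = M.map (algebraMap ℂ A) := rfl
  have hq : (projQ t α).map (algebraMap ℂ A) = !![algebraMap ℂ A (t : ℂ), algebraMap ℂ A α;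
      algebraMap ℂ A (starRingEnd ℂ α), algebraMap ℂ A ((1 - t : ℝ) : ℂ)] := by
    ext i j
    fin_cases i <;> fin_cases j <;> rfl
  have hp : (!![1, 0; 0, 0] : Matrix (Fin 2) (Fin 2) ℂ).map (algebraMap ℂ A) = !![1, 0; 0, 0] := by
    ext i j
    fin_cases i <;> fin_cases j <;> simp
  rw [← hφ, map_sub, map_add, map_smul, map_smul, map_sub, map_one, hφ, hφ, hq, hp]

theorem stmt0_general {A : Type*} [CStarAlgebra A] (t : ℝ) (ht1 : t ≤ 1)
    (α : ℂ) (hα : ‖α‖ ^ 2 = t * (1 - t)) :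
    MatIsPos
      ((!![algebraMap ℂ A (t : ℂ), algebraMap ℂ A α;
          algebraMap ℂ A (starRingEnd ℂ α), algebraMap ℂ A ((1 - t : ℝ) : ℂ)] :
            Matrix (Fin 2) (Fin 2) A)
        + (1 / 2 : ℝ) • ((1 : Matrix (Fin 2) (Fin 2) A) -
            !![algebraMap ℂ A (t : ℂ), algebraMap ℂ A α;
              algebraMap ℂ A (starRingEnd ℂ α), algebraMap ℂ A ((1 - t : ℝ) : ℂ)])
        - (1 / (2 - t) : ℝ) • (!![1, 0; 0, 0] : Matrix (Fin 2) (Fin 2) A)) := by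
  rw [← projQ_combination_map_algebraMap]
  exact (matIsPos_projQ_combination t (by linarith) α hα).map (StarAlgHom.ofId ℂ A)

/-- for `t ∈ [0,1]` and `|α|² = t(1-t)`, the element
`q + (1/2)(1 - q) - (1/(2-t)) p` of `M₂(A)` is positive. -/
theorem stmt0 {A : Type*} [CStarAlgebra A] (t : ℝ) (ht0 : 0 ≤ t) (ht1 : t ≤ 1)
    (α : ℂ) (hα : ‖α‖ ^ 2 = t * (1 - t)) :
    MatIsPos
      ((!![algebraMap ℂ A (t : ℂ), algebraMap ℂ A α;
          algebraMap ℂ A (starRingEnd ℂ α), algebraMap ℂ A ((1 - t : ℝ) : ℂ)] :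
            Matrix (Fin 2) (Fin 2) A)
        + (1 / 2 : ℝ) • ((1 : Matrix (Fin 2) (Fin 2) A) -
            !![algebraMap ℂ A (t : ℂ), algebraMap ℂ A α;
              algebraMap ℂ A (starRingEnd ℂ α), algebraMap ℂ A ((1 - t : ℝ) : ℂ)])
        - (1 / (2 - t) : ℝ) • (!![1, 0; 0, 0] : Matrix (Fin 2) (Fin 2) A)) :=
  stmt0_general t ht1 α hα
end

section
/- Let A be a unital C*-algebra, t ∈ [0,1], and α a complex number with |α|² = t(1−t). In M₂(A) let p = diag(1,0) and let q be the projection with entries (t, α; α*, 1−t) (scalar multiples of the unit). If a ∈ M₂(A) satisfies 0 ≤ a ≤ p and a ≤ q + (1/2)(1−q), then a ≤ (1/(2−t))p. -/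
/-!
Since `0 ≤ a ≤ p = diag(1, 0)`, the lower-right entry of `a` vanishes, and positivity then forces
`a` to be a corner matrix `diag(x, 0)`. Compressing `q + ½(1 - q) - a ≥ 0` by the scalar vector
`(1, μ)` gives `c - x ≥ 0`, where `c` is the value at `(1, μ)` of the quadratic form of the scalar
matrix `q + ½(1 - q)`. For the minimising `μ = -ᾱ / (2 - t)` this value is the Schur complement
`(1 + t)/2 - |α|² / (2(2 - t)) = 1 / (2 - t)`, hence `a = diag(x, 0) ≤ (1/(2 - t)) p`.
-/

open Matrix

namespace Matrix

variable {m n R : Type*} [Fintype m] [NonUnitalNormedRing R] [StarRing R] [CStarRing R]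
  [PartialOrder R] [StarOrderedRing R]

theorem conjTranspose_mul_self_apply_eq_zero {r : Matrix m n R} {j : n}
    (hj : (rᴴ * r) j j = 0) (i : n) : (rᴴ * r) i j = 0 := by
  simp only [mul_apply, conjTranspose_apply] at hj ⊢
  have hcol : ∀ k, r k j = 0 := fun k ↦ (CStarRing.star_mul_self_eq_zero_iff _).mp <|
    (Finset.sum_eq_zero_iff_of_nonneg fun k _ ↦ star_mul_self_nonneg (r k j)).mp hj k
      (Finset.mem_univ k)
  simp [hcol]

end Matrix

section

variable {A : Type*} [CStarAlgebra A]

attribute [local instance] CStarAlgebra.spectralOrder CStarAlgebra.spectralOrderedRing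

theorem MatIsPos.posSemidef {a : Matrix (Fin 2) (Fin 2) A} (ha : MatIsPos a) : a.PosSemidef := by
  obtain ⟨r, rfl⟩ := ha
  exact posSemidef_conjTranspose_mul_self r

theorem MatIsPos.apply_eq_zero_of_apply_self_eq_zero {a : Matrix (Fin 2) (Fin 2) A}
    (ha : MatIsPos a) {j : Fin 2} (hj : a j j = 0) (i : Fin 2) : a i j = 0 ∧ a j i = 0 := by
  obtain ⟨r, rfl⟩ := ha
  have hij := conjTranspose_mul_self_apply_eq_zero hj i
  refine ⟨hij, ?_⟩
  rw [← (isHermitian_conjTranspose_mul_self r).apply j i, hij, star_zero]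

theorem MatIsPos.eq_corner_of_matIsPos_sub {a : Matrix (Fin 2) (Fin 2) A} (ha : MatIsPos a)
    (hpa : MatIsPos (!![1, 0; 0, 0] - a)) : a = !![a 0 0, 0; 0, 0] := by
  have h11 : a 1 1 = 0 := le_antisymm (by simpa using hpa.posSemidef.diag_nonneg (i := 1))
    ha.posSemidef.diag_nonneg
  have h01 := ha.apply_eq_zero_of_apply_self_eq_zero h11 0
  ext i j
  fin_cases i <;> fin_cases j <;> simp [h11, h01]

theorem matIsPos_corner {x : A} (hx : 0 ≤ x) : MatIsPos !![x, 0; 0, 0] := by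
  refine ⟨!![CFC.sqrt x, 0; 0, 0], ?_⟩
  have hsqrt : star (CFC.sqrt x) * CFC.sqrt x = x := by
    rw [(CFC.sqrt_nonneg x).isSelfAdjoint.star_eq, CFC.sqrt_mul_sqrt_self x hx]
  ext i j
  fin_cases i <;> fin_cases j <;> simp [mul_apply, hsqrt]

theorem MatIsPos.algebraMap_compress_sub_nonneg {Q : Matrix (Fin 2) (Fin 2) ℂ} {x : A}
    (h : MatIsPos (Q.map (algebraMap ℂ A) - !![x, 0; 0, 0])) (μ : ℂ) :
    0 ≤ algebraMap ℂ A ((!![1, 0; μ, 0]ᴴ * Q * !![1, 0; μ, 0]) 0 0) - x := by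
  have hV := (h.posSemidef.conjTranspose_mul_mul_same
    ((!![1, 0; μ, 0] : Matrix (Fin 2) (Fin 2) ℂ).map (algebraMap ℂ A))).diag_nonneg (i := 0)
  rw [mul_sub, sub_mul, Matrix.sub_apply, ← conjTranspose_map _ algebraMap_star_comm,
    ← Matrix.map_mul, ← Matrix.map_mul, map_apply] at hV
  simpa [mul_apply, Fin.sum_univ_two] using hV

end

open ComplexConjugate

def scalarProj (t : ℝ) (α : ℂ) : Matrix (Fin 2) (Fin 2) ℂ :=
  !![(t : ℂ), α; conj α, ((1 - t : ℝ) : ℂ)]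

theorem scalarProj_add_half_smul_one_sub_compress {t : ℝ} (ht : t ≠ 2) {α : ℂ}
    (hα : ‖α‖ ^ 2 = t * (1 - t)) :
    (!![1, 0; -conj α / (2 - t), 0]ᴴ * (scalarProj t α + (1 / 2 : ℝ) • (1 - scalarProj t α)) *
      !![1, 0; -conj α / (2 - t), 0]) 0 0 = ((1 / (2 - t) : ℝ) : ℂ) := by
  have hαα : α * conj α = t * (1 - t) := by
    rw [Complex.mul_conj', ← Complex.ofReal_pow, hα]
    push_cast
    ring
  have h2 : (2 - t : ℂ) ≠ 0 := by exact_mod_cast sub_ne_zero.mpr ht.symm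
  simp [scalarProj, mul_apply, Fin.sum_univ_two]
  field_simp
  linear_combination -hαα

theorem stmt1_general {A : Type*} [CStarAlgebra A] (t : ℝ) (ht1 : t ≤ 1)
    (α : ℂ) (hα : ‖α‖ ^ 2 = t * (1 - t))
    (p q a : Matrix (Fin 2) (Fin 2) A)
    (hp : p = !![1, 0; 0, 0])
    (hq : q = !![algebraMap ℂ A (t : ℂ), algebraMap ℂ A α;
        algebraMap ℂ A (starRingEnd ℂ α), algebraMap ℂ A ((1 - t : ℝ) : ℂ)])
    (ha0 : MatIsPos a) (hap : MatIsPos (p - a))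
    (haq : MatIsPos (q + (1 / 2 : ℝ) • ((1 : Matrix (Fin 2) (Fin 2) A) - q) - a)) :
    MatIsPos ((1 / (2 - t) : ℝ) • p - a) := by
  subst hp
  have ha : a = !![a 0 0, 0; 0, 0] := ha0.eq_corner_of_matIsPos_sub hap
  have hq' : q + (1 / 2 : ℝ) • (1 - q) =
      (scalarProj t α + (1 / 2 : ℝ) • (1 - scalarProj t α)).map (algebraMap ℂ A) := by
    have hq_map : q = (Algebra.ofId ℂ A).mapMatrix (scalarProj t α) := by
      rw [hq]; ext i j; fin_cases i <;> fin_cases j <;> rfl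
    rw [hq_map]
    change _ = (Algebra.ofId ℂ A).mapMatrix _
    rw [map_add, AlgHom.map_smul_of_tower, map_sub, map_one]
  rw [hq', ha] at haq
  have hx := haq.algebraMap_compress_sub_nonneg (-conj α / (2 - t))
  rw [scalarProj_add_half_smul_one_sub_compress (by linarith) hα] at hx
  convert matIsPos_corner hx using 1
  rw [ha]
  ext i j
  fin_cases i <;> fin_cases j <;> simp [Algebra.algebraMap_eq_smul_one, ← Complex.coe_smul]

/-- with `p = diag(1,0)` and `q = (t, α; α*, 1-t)` (`|α|² = t(1-t)`, `t ∈ [0,1]`),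
any `a ∈ M₂(A)` with `0 ≤ a ≤ p` and `a ≤ q + (1/2)(1-q)` satisfies `a ≤ (1/(2-t)) p`. -/
theorem stmt1 {A : Type*} [CStarAlgebra A] (t : ℝ) (ht0 : 0 ≤ t) (ht1 : t ≤ 1)
    (α : ℂ) (hα : ‖α‖ ^ 2 = t * (1 - t))
    (p q a : Matrix (Fin 2) (Fin 2) A)
    (hp : p = !![1, 0; 0, 0])
    (hq : q = !![algebraMap ℂ A (t : ℂ), algebraMap ℂ A α;
        algebraMap ℂ A (starRingEnd ℂ α), algebraMap ℂ A ((1 - t : ℝ) : ℂ)])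
    (ha0 : MatIsPos a) (hap : MatIsPos (p - a))
    (haq : MatIsPos (q + (1 / 2 : ℝ) • ((1 : Matrix (Fin 2) (Fin 2) A) - q) - a)) :
    MatIsPos ((1 / (2 - t) : ℝ) • p - a) :=
  stmt1_general t ht1 α hα p q a hp hq ha0 hap haq
end

section
/- Let A be a unital C*-algebra and let p, q be orthogonal projections in A (i.e. pq = 0). Then for every self-adjoint a with 0 ≤ a ≤ p and a ≤ q + (1/2)(1−q), one has a ≤ (1/2)p. -/
/-- if `p, q` are orthogonal projections (`p q = 0`) in a unital C*-algebra,
then every self-adjoint `a` with `0 ≤ a ≤ p` and `a ≤ q + (1/2)(1-q)`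
satisfies `a ≤ (1/2) p`. -/
theorem stmt3 {A : Type*} [CStarAlgebra A] [PartialOrder A] [StarOrderedRing A]
    (p q : A) (hp : IsSelfAdjoint p) (hp2 : p * p = p)
    (hq : IsSelfAdjoint q) (hq2 : q * q = q) (hpq : p * q = 0)
    (a : A) (ha : IsSelfAdjoint a) (ha0 : 0 ≤ a) (hap : a ≤ p)
    (haq : a ≤ q + (1 / 2 : ℝ) • (1 - q)) :
    a ≤ (1 / 2 : ℝ) • p := by
  have hsp : star p = p := hp
  have hr : star (1 - p) = 1 - p := by simp [hsp]
  -- Step 1: (1-p) a (1-p) = 0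
  have h1 : star (1 - p) * a * (1 - p) ≤ star (1 - p) * p * (1 - p) :=
    star_left_conjugate_le_conjugate hap _
  have h2 : star (1 - p) * p * (1 - p) = 0 := by
    rw [hr, sub_mul, one_mul, hp2, sub_self, zero_mul]
  have h3 : star (1 - p) * a * (1 - p) = 0 :=
    le_antisymm (h2 ▸ h1) (star_left_conjugate_nonneg ha0 _)
  -- Step 2: a * (1 - p) = 0 using a square root of a
  obtain ⟨s, hss, hsadj⟩ : ∃ s : A, s * s = a ∧ star s = s :=
    ⟨CFC.sqrt a, CFC.sqrt_mul_sqrt_self a ha0,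
      (IsSelfAdjoint.of_nonneg (CFC.sqrt_nonneg (a := a))).star_eq⟩
  have h4 : star (s * (1 - p)) * (s * (1 - p)) = 0 := by
    rw [star_mul, hr, hsadj]
    calc (1 - p) * s * (s * (1 - p)) = (1 - p) * (s * s) * (1 - p) := by noncomm_ring
      _ = star (1 - p) * a * (1 - p) := by rw [hss, hr]
      _ = 0 := h3
  have h5 : s * (1 - p) = 0 := by
    rwa [CStarRing.star_mul_self_eq_zero_iff] at h4
  have h6 : a * (1 - p) = 0 := by
    rw [← hss, mul_assoc, h5, mul_zero]
  have hapq : a * p = a := by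
    have := h6
    rw [mul_sub, mul_one, sub_eq_zero] at this
    exact this.symm
  have hpa : p * a = a := by
    have := congrArg star hapq
    rwa [star_mul, hsp, ha.star_eq] at this
  -- Step 3: conjugate haq by p
  have h7 : star p * a * p ≤ star p * (q + (1 / 2 : ℝ) • (1 - q)) * p :=
    star_left_conjugate_le_conjugate haq _
  have h8 : star p * a * p = a := by rw [hsp, hpa, hapq]
  have h9 : star p * (q + (1 / 2 : ℝ) • (1 - q)) * p = (1 / 2 : ℝ) • p := by
    rw [hsp, mul_add, add_mul, mul_smul_comm, smul_mul_assoc, mul_sub, sub_mul, mul_one]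
    simp [← mul_assoc, hpq, hp2]
  rwa [h8, h9] at h7
end

section
/- Let B be a unital C*-algebra and T a positive invertible element of B. Define Φ_T on the order interval [0,1] of B by Φ_T(a) = (1 + T^{-2})^{1/2} (1 − (1 + T a T)^{-1}) (1 + T^{-2})^{1/2}. Then Φ_T maps [0,1] into [0,1], and the map Ψ(a) = T^{-1} ((1 − (1 + T^{-2})^{-1/2} a (1 + T^{-2})^{-1/2})^{-1} − 1) T^{-1} is a two-sided inverse for Φ_T on [0,1]; in particular Φ_T is an order isomorphism of the effect algebra {a ∈ B : 0 ≤ a ≤ 1} onto itself. -/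
/-!
`Φ_T` is the composite of three order isomorphisms between order intervals: `a ↦ T a T` maps
`[0, 1]` onto `[0, T²]`; `x ↦ 1 - (1 + x)⁻¹` maps `[0, T²]` onto `[0, 1 - (1 + T²)⁻¹]`, because
inversion is order-reversing on strictly positive elements; and since
`(1 + T⁻²)⁻¹ = 1 - (1 + T²)⁻¹`, conjugation by `(1 + T⁻²)^{1/2}` maps that interval onto `[0, 1]`.
`Ψ` undoes the three steps in reverse order.
-/

/-- `Φ_T(a) = (1 + T⁻²)^{1/2} (1 − (1 + T a T)⁻¹) (1 + T⁻²)^{1/2}`. -/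
noncomputable def PhiT {B : Type*} [CStarAlgebra B] [PartialOrder B] [StarOrderedRing B]
    (T : B) (a : B) : B :=
  CFC.sqrt (1 + Ring.inverse (T * T)) * (1 - Ring.inverse (1 + T * a * T)) *
    CFC.sqrt (1 + Ring.inverse (T * T))

/-- `Ψ(a) = T⁻¹ ((1 − (1 + T⁻²)^{-1/2} a (1 + T⁻²)^{-1/2})⁻¹ − 1) T⁻¹`. -/
noncomputable def PsiT {B : Type*} [CStarAlgebra B] [PartialOrder B] [StarOrderedRing B]
    (T : B) (a : B) : B :=
  Ring.inverse T *
    (Ring.inverse (1 - Ring.inverse (CFC.sqrt (1 + Ring.inverse (T * T))) * a *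
        Ring.inverse (CFC.sqrt (1 + Ring.inverse (T * T)))) - 1) *
    Ring.inverse T

section

open CFC CStarAlgebra Ring

theorem inverse_one_add_inverse {R : Type*} [Ring R] {t : R} (ht : IsUnit t)
    (ht₁ : IsUnit (1 + t)) : (1 + t⁻¹ʳ)⁻¹ʳ = 1 - (1 + t)⁻¹ʳ := by
  have hcomm : Commute (1 + t) t⁻¹ʳ :=
    (Commute.one_left _).add_left ((mul_inverse_cancel _ ht).trans (inverse_mul_cancel _ ht).symm)
  have h : 1 + t⁻¹ʳ = (1 + t) * t⁻¹ʳ := by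
    rw [add_mul, one_mul, mul_inverse_cancel _ ht, add_comm]
  rw [h, mul_inverse_rev' hcomm, inverse_inverse ht]
  nth_rw 1 [← add_sub_cancel_left 1 t]
  rw [sub_mul, one_mul, mul_inverse_cancel _ ht₁]

variable {A : Type*} [CStarAlgebra A] [PartialOrder A] [StarOrderedRing A]

theorem IsStrictlyPositive.mul_self {T : A} (hT : IsStrictlyPositive T) :
    IsStrictlyPositive (T * T) :=
  (hT.commute_iff hT).mp (Commute.refl T)

theorem IsStrictlyPositive.one_add {x : A} (hx : 0 ≤ x) : IsStrictlyPositive (1 + x) :=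
  isStrictlyPositive_one.add_nonneg hx

theorem ringInverse_le_ringInverse_iff {a b : A} (ha : IsStrictlyPositive a)
    (hb : IsStrictlyPositive b) : a⁻¹ʳ ≤ b⁻¹ʳ ↔ b ≤ a := by
  refine ⟨fun h => ?_, fun h => ringInverse_le_ringInverse h hb⟩
  simpa only [inverse_inverse ha.isUnit, inverse_inverse hb.isUnit] using
    ringInverse_le_ringInverse h ha.ringInverse

section ConjSqrt

variable {c a b : A}

theorem conjSqrt_nonneg (c : A) (ha : 0 ≤ a) : 0 ≤ conjSqrt c a := by
  simpa using conjSqrt_le_conjSqrt (c := c) ha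

theorem conjSqrt_le_self (hc : 0 ≤ c) (ha : a ≤ 1) : conjSqrt c a ≤ c :=
  (conjSqrt_le_conjSqrt ha).trans_eq (conjSqrt_one c hc)

theorem conjSqrt_le_conjSqrt_iff (hc : IsStrictlyPositive c) :
    conjSqrt c a ≤ conjSqrt c b ↔ a ≤ b := by
  refine ⟨fun h => ?_, conjSqrt_le_conjSqrt⟩
  simpa only [conjSqrt_ringInverse_conjSqrt c _ hc] using conjSqrt_le_conjSqrt (c := c⁻¹ʳ) h

theorem conjSqrt_le_one_iff (hc : IsStrictlyPositive c) : conjSqrt c a ≤ 1 ↔ a ≤ c⁻¹ʳ := by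
  have h := conjSqrt_ringInverse_self c⁻¹ʳ hc.ringInverse
  rw [inverse_inverse hc.isUnit] at h
  rw [← h, conjSqrt_le_conjSqrt_iff hc]

end ConjSqrt

section OneSubInverseOneAdd

variable {t x y : A}

theorem one_sub_inverse_one_add_nonneg (hx : 0 ≤ x) : 0 ≤ 1 - (1 + x)⁻¹ʳ := by
  simpa using ringInverse_le_ringInverse (le_add_of_nonneg_right hx) isStrictlyPositive_one

theorem one_sub_inverse_one_add_le_iff (hx : 0 ≤ x) (hy : 0 ≤ y) :
    1 - (1 + x)⁻¹ʳ ≤ 1 - (1 + y)⁻¹ʳ ↔ x ≤ y := by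
  rw [sub_le_sub_iff_left, ringInverse_le_ringInverse_iff (.one_add hy) (.one_add hx),
    add_le_add_iff_left]

theorem isStrictlyPositive_one_sub (ht : 0 ≤ t) (hy : y ≤ 1 - (1 + t)⁻¹ʳ) :
    IsStrictlyPositive (1 - y) :=
  (IsStrictlyPositive.one_add ht).ringInverse.of_le (le_sub_comm.mp hy)

theorem inverse_one_sub_sub_one_nonneg (hy : 0 ≤ y) (hy₁ : IsStrictlyPositive (1 - y)) :
    0 ≤ (1 - y)⁻¹ʳ - 1 := by
  simpa using ringInverse_le_ringInverse (sub_le_self 1 hy) hy₁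

theorem inverse_one_sub_sub_one_le (ht : 0 ≤ t) (hy : y ≤ 1 - (1 + t)⁻¹ʳ) :
    (1 - y)⁻¹ʳ - 1 ≤ t := by
  have ht₁ := IsStrictlyPositive.one_add ht
  have h := ringInverse_le_ringInverse (le_sub_comm.mp hy) ht₁.ringInverse
  rw [inverse_inverse ht₁.isUnit] at h
  rwa [sub_le_iff_le_add']

theorem conjSqrt_inverse_one_add_inverse_le (ht : IsStrictlyPositive t) (hx : x ≤ 1) :
    conjSqrt (1 + t⁻¹ʳ)⁻¹ʳ x ≤ 1 - (1 + t)⁻¹ʳ := by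
  rw [← inverse_one_add_inverse ht.isUnit (IsStrictlyPositive.one_add ht.nonneg).isUnit]
  exact conjSqrt_le_self (IsStrictlyPositive.one_add ht.ringInverse.nonneg).ringInverse.nonneg hx

end OneSubInverseOneAdd

section PhiPsi

variable {T a b : A}

theorem PhiT_eq_conjSqrt (hT : 0 ≤ T) :
    PhiT T a = conjSqrt (1 + (T * T)⁻¹ʳ) (1 - (1 + conjSqrt (T * T) a)⁻¹ʳ) := by
  rw [conjSqrt_apply, conjSqrt_apply, sqrt_mul_self T hT]
  rfl

theorem PsiT_eq_conjSqrt (hT : 0 ≤ T) :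
    PsiT T a = conjSqrt (T * T)⁻¹ʳ ((1 - conjSqrt (1 + (T * T)⁻¹ʳ)⁻¹ʳ a)⁻¹ʳ - 1) := by
  simp only [conjSqrt_apply, sqrt_ringInverse, sqrt_mul_self T hT]
  rfl

theorem PhiT_nonneg (hT : 0 ≤ T) (ha : 0 ≤ a) : 0 ≤ PhiT T a := by
  rw [PhiT_eq_conjSqrt hT]
  exact conjSqrt_nonneg _ (one_sub_inverse_one_add_nonneg (conjSqrt_nonneg _ ha))

theorem PhiT_le_one (hT : IsStrictlyPositive T) (ha : 0 ≤ a) (ha₁ : a ≤ 1) : PhiT T a ≤ 1 := by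
  have ht := hT.mul_self
  rw [PhiT_eq_conjSqrt hT.nonneg, conjSqrt_le_one_iff (.one_add ht.ringInverse.nonneg),
    inverse_one_add_inverse ht.isUnit (IsStrictlyPositive.one_add ht.nonneg).isUnit,
    one_sub_inverse_one_add_le_iff (conjSqrt_nonneg _ ha) ht.nonneg]
  exact conjSqrt_le_self ht.nonneg ha₁

theorem PsiT_PhiT (hT : IsStrictlyPositive T) (ha : 0 ≤ a) : PsiT T (PhiT T a) = a := by
  have ht := hT.mul_self
  rw [PhiT_eq_conjSqrt hT.nonneg, PsiT_eq_conjSqrt hT.nonneg,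
    conjSqrt_ringInverse_conjSqrt _ _ (.one_add ht.ringInverse.nonneg), sub_sub_cancel,
    inverse_inverse (IsStrictlyPositive.one_add (conjSqrt_nonneg _ ha)).isUnit,
    add_sub_cancel_left, conjSqrt_ringInverse_conjSqrt _ _ ht]

theorem PsiT_nonneg (hT : IsStrictlyPositive T) (ha : 0 ≤ a) (ha₁ : a ≤ 1) :
    0 ≤ PsiT T a := by
  have ht := hT.mul_self
  rw [PsiT_eq_conjSqrt hT.nonneg]
  exact conjSqrt_nonneg _ <| inverse_one_sub_sub_one_nonneg (conjSqrt_nonneg _ ha) <|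
    isStrictlyPositive_one_sub ht.nonneg (conjSqrt_inverse_one_add_inverse_le ht ha₁)

theorem PsiT_le_one (hT : IsStrictlyPositive T) (ha₁ : a ≤ 1) : PsiT T a ≤ 1 := by
  have ht := hT.mul_self
  rw [PsiT_eq_conjSqrt hT.nonneg, conjSqrt_le_one_iff ht.ringInverse, inverse_inverse ht.isUnit]
  exact inverse_one_sub_sub_one_le ht.nonneg (conjSqrt_inverse_one_add_inverse_le ht ha₁)

theorem PhiT_PsiT (hT : IsStrictlyPositive T) (ha₁ : a ≤ 1) : PhiT T (PsiT T a) = a := by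
  have ht := hT.mul_self
  have hy := isStrictlyPositive_one_sub ht.nonneg (conjSqrt_inverse_one_add_inverse_le ht ha₁)
  rw [PhiT_eq_conjSqrt hT.nonneg, PsiT_eq_conjSqrt hT.nonneg,
    conjSqrt_conjSqrt_ringInverse _ _ ht, add_sub_cancel, inverse_inverse hy.isUnit,
    sub_sub_cancel, conjSqrt_conjSqrt_ringInverse _ _ (.one_add ht.ringInverse.nonneg)]

theorem PhiT_le_PhiT_iff (hT : IsStrictlyPositive T) (ha : 0 ≤ a) (hb : 0 ≤ b) :
    PhiT T a ≤ PhiT T b ↔ a ≤ b := by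
  have ht := hT.mul_self
  rw [PhiT_eq_conjSqrt hT.nonneg, PhiT_eq_conjSqrt hT.nonneg,
    conjSqrt_le_conjSqrt_iff (.one_add ht.ringInverse.nonneg),
    one_sub_inverse_one_add_le_iff (conjSqrt_nonneg _ ha) (conjSqrt_nonneg _ hb),
    conjSqrt_le_conjSqrt_iff ht]

end PhiPsi

end

/-- for a positive invertible `T`, `Φ_T` maps `[0,1]` into `[0,1]`,
`Ψ` is a two-sided inverse of `Φ_T` on `[0,1]`, and `Φ_T` is an order isomorphism of
the effect algebra `{a : 0 ≤ a ≤ 1}` onto itself. -/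
theorem stmt4 {B : Type*} [CStarAlgebra B] [PartialOrder B] [StarOrderedRing B]
    (T : B) (hT : 0 ≤ T) (hTu : IsUnit T) :
    (∀ a : B, 0 ≤ a → a ≤ 1 → 0 ≤ PhiT T a ∧ PhiT T a ≤ 1) ∧
    (∀ a : B, 0 ≤ a → a ≤ 1 → PsiT T (PhiT T a) = a) ∧
    (∀ a : B, 0 ≤ a → a ≤ 1 → 0 ≤ PsiT T a ∧ PsiT T a ≤ 1 ∧ PhiT T (PsiT T a) = a) ∧
    (∀ a b : B, 0 ≤ a → a ≤ 1 → 0 ≤ b → b ≤ 1 → (a ≤ b ↔ PhiT T a ≤ PhiT T b)) := by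
  have hT' : IsStrictlyPositive T := hTu.isStrictlyPositive hT
  exact ⟨fun a ha ha₁ => ⟨PhiT_nonneg hT ha, PhiT_le_one hT' ha ha₁⟩,
    fun a ha _ => PsiT_PhiT hT' ha,
    fun a ha ha₁ => ⟨PsiT_nonneg hT' ha ha₁, PsiT_le_one hT' ha₁, PhiT_PsiT hT' ha₁⟩,
    fun a b ha _ hb _ => (PhiT_le_PhiT_iff hT' ha hb).symm⟩
end

section
/- Let B be a unital C*-algebra and α a non-zero real number. For every a ∈ B with 0 ≤ a ≤ 1, one has (1 + α²) a (1 + α² a)^{-1} ∈ [0,1], and the map a ↦ (1 + α²) a (1 + α² a)^{-1} is an order automorphism of the effect algebra of B with inverse a ↦ a (1 + α²(1 − a))^{-1}. -/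
/-!
Write `t = α²` and `σ(a) = (1 - a)(1 + t a)⁻¹`, the operator version of the Möbius involution
`x ↦ (1 - x) / (1 + t x)` of `[0, 1]`. The map of the theorem is `1 - σ`, and its claimed inverse is
`a ↦ σ(1 - a)`, so everything reduces to three facts about `σ`: it is an involution (a purely
algebraic identity), it maps effects to effects (each of `σ(a)` and `1 - σ(a)` is a product of
commuting positive elements), and it reverses the order, since `t σ(a) = (1 + t)(1 + t a)⁻¹ - 1`
and inversion is order-reversing on strictly positive elements.
-/

open scoped Ring

theorem Commute.ringInverse_right {M₀ : Type*} [MonoidWithZero M₀] {a b : M₀}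
    (h : Commute a b) : Commute a b⁻¹ʳ := by
  by_cases hb : IsUnit b
  · rw [Ring.inverse_of_isUnit hb]
    exact Commute.units_inv_right h
  · rw [Ring.inverse_non_unit b hb]
    exact Commute.zero_right a

namespace CStarAlgebra

variable {A : Type*} [CStarAlgebra A] [PartialOrder A] [StarOrderedRing A]

lemma ringInverse_le_ringInverse_iff {a b : A} (ha : IsStrictlyPositive a)
    (hb : IsStrictlyPositive b) : a⁻¹ʳ ≤ b⁻¹ʳ ↔ b ≤ a := by
  refine ⟨fun h => ?_, fun h => ringInverse_le_ringInverse h hb⟩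
  simpa only [Ring.inverse_inverse ha.isUnit, Ring.inverse_inverse hb.isUnit] using
    ringInverse_le_ringInverse h ha.ringInverse

end CStarAlgebra

noncomputable def moebiusInvolution {𝕜 R : Type*} [Field 𝕜] [Ring R] [Algebra 𝕜 R]
    (t : 𝕜) (a : R) : R :=
  (1 - a) * (1 + t • a)⁻¹ʳ

section Algebraic

variable {𝕜 R : Type*} [Field 𝕜] [Ring R] [Algebra 𝕜 R] {t : 𝕜} {a : R}

lemma one_sub_moebiusInvolution (h : IsUnit (1 + t • a)) :
    1 - moebiusInvolution t a = (1 + t) • (a * (1 + t • a)⁻¹ʳ) := by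
  conv_lhs => rw [← Ring.mul_inverse_cancel _ h]
  rw [moebiusInvolution, ← sub_mul, ← smul_mul_assoc, add_smul, one_smul]
  congr 1
  abel

lemma one_add_smul_moebiusInvolution (h : IsUnit (1 + t • a)) :
    1 + t • moebiusInvolution t a = (1 + t) • (1 + t • a)⁻¹ʳ := by
  conv_lhs => rw [← Ring.mul_inverse_cancel _ h]
  rw [moebiusInvolution, ← smul_mul_assoc, ← add_mul, ← smul_one_mul (1 + t), smul_sub,
    add_smul, one_smul]
  congr 1
  abel

lemma moebiusInvolution_moebiusInvolution (h : IsUnit (1 + t • a)) (ht : 1 + t ≠ 0) :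
    moebiusInvolution t (moebiusInvolution t a) = a := by
  have hunit : IsUnit (1 + t • moebiusInvolution t a) := by
    rw [one_add_smul_moebiusInvolution h, Algebra.smul_def]
    exact ((isUnit_iff_ne_zero.mpr ht).map (algebraMap 𝕜 R)).mul h.ringInverse
  rw [moebiusInvolution, eq_comm, Ring.eq_mul_inverse_iff_mul_eq _ _ _ hunit,
    one_sub_moebiusInvolution h, one_add_smul_moebiusInvolution h, mul_smul_comm]

end Algebraic

section Order

variable {A : Type*} [CStarAlgebra A] [PartialOrder A] [StarOrderedRing A] {t : ℝ} {a b : A}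

lemma isStrictlyPositive_one_add_smul (ht : 0 ≤ t) (ha : 0 ≤ a) :
    IsStrictlyPositive (1 + t • a) :=
  isStrictlyPositive_one.add_nonneg (smul_nonneg ht ha)

lemma isUnit_one_add_smul (ht : 0 ≤ t) (ha : 0 ≤ a) : IsUnit (1 + t • a) :=
  (isStrictlyPositive_one_add_smul ht ha).isUnit

lemma mul_ringInverse_one_add_smul_nonneg {x : A} (ht : 0 ≤ t) (ha : 0 ≤ a) (hx : 0 ≤ x)
    (hxa : Commute x a) : 0 ≤ x * (1 + t • a)⁻¹ʳ :=
  Commute.mul_nonneg hx (isStrictlyPositive_one_add_smul ht ha).ringInverse.nonneg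
    (((Commute.one_right x).add_right (hxa.smul_right t)).ringInverse_right)

lemma moebiusInvolution_nonneg (ht : 0 ≤ t) (ha₀ : 0 ≤ a) (ha₁ : a ≤ 1) :
    0 ≤ moebiusInvolution t a :=
  mul_ringInverse_one_add_smul_nonneg ht ha₀ (sub_nonneg.mpr ha₁)
    ((Commute.one_left a).sub_left (Commute.refl a))

lemma moebiusInvolution_le_one (ht : 0 ≤ t) (ha₀ : 0 ≤ a) : moebiusInvolution t a ≤ 1 := by
  rw [← sub_nonneg, one_sub_moebiusInvolution (isUnit_one_add_smul ht ha₀)]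
  exact smul_nonneg (by positivity)
    (mul_ringInverse_one_add_smul_nonneg ht ha₀ ha₀ (Commute.refl a))

lemma moebiusInvolution_le_moebiusInvolution_iff (ht : 0 < t) (ha : 0 ≤ a) (hb : 0 ≤ b) :
    moebiusInvolution t a ≤ moebiusInvolution t b ↔ b ≤ a := by
  have hsmul : ∀ {c : A}, 0 ≤ c → t • moebiusInvolution t c = (1 + t) • (1 + t • c)⁻¹ʳ - 1 :=
    fun hc => eq_sub_of_add_eq' (one_add_smul_moebiusInvolution (isUnit_one_add_smul ht.le hc))
  rw [← smul_le_smul_iff_of_pos_left ht, hsmul ha, hsmul hb, sub_le_sub_iff_right,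
    smul_le_smul_iff_of_pos_left (by positivity),
    CStarAlgebra.ringInverse_le_ringInverse_iff (isStrictlyPositive_one_add_smul ht.le ha)
      (isStrictlyPositive_one_add_smul ht.le hb),
    add_le_add_iff_left, smul_le_smul_iff_of_pos_left ht]

end Order

/-- for a non-zero real `α`, the map
`a ↦ (1 + α²) a (1 + α² a)⁻¹` is an order automorphism of the effect algebra of `B`
with inverse `a ↦ a (1 + α²(1 − a))⁻¹`. -/
theorem stmt6 {B : Type*} [CStarAlgebra B] [PartialOrder B] [StarOrderedRing B]
    (α : ℝ) (hα : α ≠ 0) :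
    (∀ a : B, 0 ≤ a → a ≤ 1 →
      0 ≤ (1 + α ^ 2) • (a * Ring.inverse (1 + (α ^ 2) • a)) ∧
      (1 + α ^ 2) • (a * Ring.inverse (1 + (α ^ 2) • a)) ≤ 1) ∧
    (∀ a : B, 0 ≤ a → a ≤ 1 →
      ((1 + α ^ 2) • (a * Ring.inverse (1 + (α ^ 2) • a))) *
          Ring.inverse (1 + (α ^ 2) • (1 - (1 + α ^ 2) • (a * Ring.inverse (1 + (α ^ 2) • a))))
        = a) ∧
    (∀ a : B, 0 ≤ a → a ≤ 1 →
      0 ≤ a * Ring.inverse (1 + (α ^ 2) • (1 - a)) ∧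
      a * Ring.inverse (1 + (α ^ 2) • (1 - a)) ≤ 1 ∧
      (1 + α ^ 2) • ((a * Ring.inverse (1 + (α ^ 2) • (1 - a))) *
          Ring.inverse (1 + (α ^ 2) • (a * Ring.inverse (1 + (α ^ 2) • (1 - a)))))
        = a) ∧
    (∀ a b : B, 0 ≤ a → a ≤ 1 → 0 ≤ b → b ≤ 1 →
      (a ≤ b ↔
        (1 + α ^ 2) • (a * Ring.inverse (1 + (α ^ 2) • a)) ≤
        (1 + α ^ 2) • (b * Ring.inverse (1 + (α ^ 2) • b)))) := by
  set t := α ^ 2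
  have ht : 0 < t := by positivity
  have h1t : 1 + t ≠ 0 := by positivity
  have hφ : ∀ a : B, 0 ≤ a →
      (1 + t) • (a * (1 + t • a)⁻¹ʳ) = 1 - moebiusInvolution t a :=
    fun a ha => (one_sub_moebiusInvolution (isUnit_one_add_smul ht.le ha)).symm
  have hψ : ∀ a : B, a * (1 + t • (1 - a))⁻¹ʳ = moebiusInvolution t (1 - a) := by
    intro a
    rw [moebiusInvolution, sub_sub_cancel]
  refine ⟨fun a ha₀ ha₁ => ?_, fun a ha₀ ha₁ => ?_, fun a ha₀ ha₁ => ?_,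
    fun a b ha₀ _ hb₀ _ => ?_⟩
  · rw [hφ a ha₀, sub_nonneg, sub_le_self_iff]
    exact ⟨moebiusInvolution_le_one ht.le ha₀, moebiusInvolution_nonneg ht.le ha₀ ha₁⟩
  · rw [hφ a ha₀, hψ, sub_sub_cancel,
      moebiusInvolution_moebiusInvolution (isUnit_one_add_smul ht.le ha₀) h1t]
  · have h1a : 0 ≤ 1 - a := sub_nonneg.mpr ha₁
    have hψ₀ := moebiusInvolution_nonneg ht.le h1a (sub_le_self 1 ha₀)
    rw [hψ, hφ _ hψ₀, moebiusInvolution_moebiusInvolution (isUnit_one_add_smul ht.le h1a) h1t,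
      sub_sub_cancel]
    exact ⟨hψ₀, moebiusInvolution_le_one ht.le h1a, rfl⟩
  · rw [hφ a ha₀, hφ b hb₀, sub_le_sub_iff_left,
      moebiusInvolution_le_moebiusInvolution_iff ht hb₀ ha₀]
end

section
/- Let A and B be unital C*-algebras and Φ : A^{sa} → B^{sa} an order isomorphism between their self-adjoint parts such that Φ(a) = b J(a) b + c for all a ≤ 0, where J is a Jordan *-isomorphism, b ∈ B is positive invertible, and c ∈ B^{sa}. If furthermore for every positive integer n there exists a Jordan *-isomorphism Jₙ with Φ(a) = Jₙ(a) + Φ(0) for a ≥ −n after normalizing by b, then Φ(a) = b J(a) b + c for all a ∈ A^{sa}. -/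
/-- A Jordan `*`-isomorphism: a bijective linear map preserving the adjoint and
the Jordan product. -/
def IsJordanStarIso {A B : Type*} [CStarAlgebra A] [CStarAlgebra B] (J : A →ₗ[ℂ] B) : Prop :=
  Function.Bijective J ∧ (∀ a : A, J (star a) = star (J a)) ∧
    ∀ a b : A, J (a * b + b * a) = J a * J b + J b * J a

/-- let `Φ` be an order isomorphism between the self-adjoint parts of `A` and
`B` with `Φ(a) = b J(a) b + c` for all self-adjoint `a ≤ 0`. If moreover for every positive
integer `n` there is a Jordan `*`-isomorphism `Jₙ` with
`Φ(a) = b Jₙ(a) b + Φ(0)` for all self-adjoint `a ≥ -n·1`, then `Φ(a) = b J(a) b + c`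
for all self-adjoint `a`. -/
theorem stmt9 {A B : Type*} [CStarAlgebra A] [PartialOrder A] [StarOrderedRing A]
    [CStarAlgebra B] [PartialOrder B] [StarOrderedRing B]
    (Φ : A → B)
    (hmaps : ∀ a : A, IsSelfAdjoint a → IsSelfAdjoint (Φ a))
    (hbij : Set.BijOn Φ {a : A | IsSelfAdjoint a} {y : B | IsSelfAdjoint y})
    (hord : ∀ a a' : A, IsSelfAdjoint a → IsSelfAdjoint a' → (a ≤ a' ↔ Φ a ≤ Φ a'))
    (J : A →ₗ[ℂ] B) (hJ : IsJordanStarIso J)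
    (b : B) (hb : 0 ≤ b) (hbu : IsUnit b) (c : B) (hc : IsSelfAdjoint c)
    (hneg : ∀ a : A, IsSelfAdjoint a → a ≤ 0 → Φ a = b * J a * b + c)
    (hn : ∀ n : ℕ, 0 < n → ∃ Jn : A →ₗ[ℂ] B, IsJordanStarIso Jn ∧
      ∀ a : A, IsSelfAdjoint a → -(n : A) ≤ a → Φ a = b * Jn a * b + Φ 0) :
    ∀ a : A, IsSelfAdjoint a → Φ a = b * J a * b + c := by
  intro a ha
  -- Φ 0 = c
  have hΦ0 : Φ 0 = c := by
    have := hneg 0 (IsSelfAdjoint.zero A) le_rfl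
    simpa using this
  -- pick n
  set p := a⁺ with hp
  set q := a⁻ with hq
  have hp0 : 0 ≤ p := CFC.posPart_nonneg a
  have hq0 : 0 ≤ q := CFC.negPart_nonneg a
  have hpq : p - q = a := CFC.posPart_sub_negPart a ha
  obtain ⟨n, hn1, hn2⟩ : ∃ n : ℕ, ‖p‖ ≤ n ∧ ‖q‖ ≤ n := by
    obtain ⟨n, hn⟩ := exists_nat_ge (max ‖p‖ ‖q‖)
    exact ⟨n, (le_max_left _ _).trans hn, (le_max_right _ _).trans hn⟩
  have hnpos : 0 < n + 1 := Nat.succ_pos n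
  obtain ⟨Jn, hJn, hJneq⟩ := hn (n + 1) hnpos
  -- for y selfadjoint with -(n+1) ≤ y ≤ 0, Jn y = J y
  have key : ∀ y : A, IsSelfAdjoint y → -((n + 1 : ℕ) : A) ≤ y → y ≤ 0 → Jn y = J y := by
    intro y hy hy1 hy2
    have e1 : Φ y = b * Jn y * b + c := by rw [hJneq y hy hy1, hΦ0]
    have e2 : Φ y = b * J y * b + c := hneg y hy hy2
    have e3 : b * Jn y * b = b * J y * b := by
      have := e1.symm.trans e2
      exact add_right_cancel this
    have e4 : Jn y * b = J y * b := hbu.mul_left_cancel (by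
      rw [← mul_assoc, ← mul_assoc]; exact e3)
    exact hbu.mul_right_cancel e4
  -- bounds
  have hcast : ((n + 1 : ℕ) : A) = algebraMap ℝ A ((n + 1 : ℕ) : ℝ) := by
    simp [map_natCast]
  have hbound : ∀ y : A, 0 ≤ y → ‖y‖ ≤ n → -((n + 1 : ℕ) : A) ≤ -y := by
    intro y hy hny
    rw [neg_le_neg_iff]
    calc y ≤ algebraMap ℝ A ‖y‖ :=
          IsSelfAdjoint.le_algebraMap_norm_self hy.isSelfAdjoint
      _ ≤ ((n + 1 : ℕ) : A) := by
          rw [hcast, ← sub_nonneg, ← map_sub, Algebra.algebraMap_eq_smul_one]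
          have h1 : (0:ℝ) ≤ ((n + 1 : ℕ) : ℝ) - ‖y‖ := by push_cast; linarith
          have h2 : (0:A) ≤ 1 := by
            simpa using star_mul_self (1 : A) ▸ star_mul_self_nonneg (1 : A)
          exact smul_nonneg h1 h2
  have hple : -((n + 1 : ℕ) : A) ≤ -p := hbound p hp0 hn1
  have hqle : -((n + 1 : ℕ) : A) ≤ -q := hbound q hq0 hn2
  have hJp : Jn (-p) = J (-p) := key (-p) hp0.isSelfAdjoint.neg hple (neg_nonpos.mpr hp0)
  have hJq : Jn (-q) = J (-q) := key (-q) hq0.isSelfAdjoint.neg hqle (neg_nonpos.mpr hq0)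
  have hJa : Jn a = J a := by
    rw [← hpq, show p - q = -q - -p by abel, map_sub, map_sub, hJp, hJq]
  have hna : -((n + 1 : ℕ) : A) ≤ a := le_trans hqle (by rw [← hpq]; simpa using hp0)
  rw [hJneq a ha hna, hJa, hΦ0]
end

section
/- Let A and B be unital C*-algebras, and assume there is an order isomorphism Φ : A^{sa} → B^{++} from the self-adjoint part of A onto the positive invertible elements of B such that for all positive integers n there exist a fixed positive invertible b ∈ B and Jordan *-isomorphisms Jₙ with Φ(a) = b Jₙ(a) b + n b² + Φ(−n·1) for all a ≥ −n·1. Then the sequence (‖Φ(−n·1)‖) is bounded, and hence no such Φ exists. -/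
/-- there is no order isomorphism `Φ` from the self-adjoint part of `A` onto
the positive invertible elements of `B` such that, for some fixed positive invertible
`b ∈ B` and Jordan `*`-isomorphisms `Jₙ`, `Φ(a) = b Jₙ(a) b + n b² + Φ(-n·1)` holds
for all self-adjoint `a ≥ -n·1` and all positive integers `n`. -/
theorem stmt11 {A B : Type*} [CStarAlgebra A] [PartialOrder A] [StarOrderedRing A]
    [CStarAlgebra B] [PartialOrder B] [StarOrderedRing B] [Nontrivial B]
    (Φ : A → B)
    (hbij : Set.BijOn Φ {a : A | IsSelfAdjoint a} {y : B | 0 ≤ y ∧ IsUnit y})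
    (hord : ∀ a a' : A, IsSelfAdjoint a → IsSelfAdjoint a' → (a ≤ a' ↔ Φ a ≤ Φ a'))
    (b : B) (hb : 0 ≤ b) (hbu : IsUnit b)
    (hn : ∀ n : ℕ, 0 < n → ∃ Jn : A →ₗ[ℂ] B, IsJordanStarIso Jn ∧
      ∀ a : A, IsSelfAdjoint a → -(n : A) ≤ a →
        Φ a = b * Jn a * b + (n : B) * (b * b) + Φ (-(n : A))) :
    False := by
  have hbne : b ≠ 0 := hbu.ne_zero
  have hbnorm : (0:ℝ) < ‖b‖ := norm_pos_iff.mpr hbne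
  have hsb : star b = b := IsSelfAdjoint.of_nonneg hb
  have hbb : (0:B) ≤ b * b := by
    have := star_mul_self_nonneg b
    rwa [hsb] at this
  -- key estimate: for all n > 0, n * ‖b‖² ≤ ‖Φ 0‖
  have key : ∀ n : ℕ, 0 < n → (n : ℝ) * (‖b‖ * ‖b‖) ≤ ‖Φ 0‖ := by
    intro n hnpos
    obtain ⟨Jn, _, hJ⟩ := hn n hnpos
    have h0 : Φ 0 = b * Jn 0 * b + (n : B) * (b * b) + Φ (-(n : A)) := by
      refine hJ 0 (show IsSelfAdjoint (0:A) from star_zero A) ?_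
      simp
    rw [map_zero, mul_zero, zero_mul, zero_add] at h0
    have hPhin : (0:B) ≤ Φ (-(n : A)) := by
      have : Φ (-(n:A)) ∈ {y : B | 0 ≤ y ∧ IsUnit y} := hbij.mapsTo (by
        simp [Set.mem_setOf_eq]
        exact (IsSelfAdjoint.natCast n).neg)
      exact this.1
    have hle : (n : B) * (b * b) ≤ Φ 0 := by
      rw [h0]; exact le_add_of_nonneg_right hPhin
    have hnn : (0:B) ≤ (n : B) * (b * b) := by
      have : (n : B) * (b * b) = n • (b * b) := by simp [nsmul_eq_mul]
      rw [this]; exact nsmul_nonneg hbb n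
    have := CStarAlgebra.norm_le_norm_of_nonneg_of_le hnn hle
    have e : (n : B) * (b * b) = (n : ℝ) • (b * b) := by
      rw [Algebra.smul_def, map_natCast]
    have hnormbb : ‖b * b‖ = ‖b‖ * ‖b‖ := by
      nth_rewrite 1 [← hsb]
      exact CStarRing.norm_star_mul_self (x := b)
    calc (n : ℝ) * (‖b‖ * ‖b‖) = ‖(n : B) * (b * b)‖ := by
          rw [e, norm_smul, hnormbb]; simp
      _ ≤ ‖Φ 0‖ := this
  obtain ⟨n, hn'⟩ := exists_nat_gt (‖Φ 0‖ / (‖b‖ * ‖b‖))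
  have hnpos : 0 < n := by
    by_contra h
    push_neg at h
    interval_cases n
    simp at hn'
    exact absurd hn' (not_lt.mpr (div_nonneg (norm_nonneg _) (by positivity)))
  have := key n hnpos
  have h2 : ‖Φ 0‖ / (‖b‖ * ‖b‖) < (n:ℝ) := hn'
  have : ‖Φ 0‖ < (n:ℝ) * (‖b‖ * ‖b‖) := by
    rwa [div_lt_iff₀ (by positivity)] at h2
  linarith
end

section
/- Let Φ : C(X, ℝ⁺) → C(Y, ℝ⁺) be an order isomorphism between the cones of nonnegative continuous functions on compact Hausdorff spaces X and Y. Then the map Ψ : C(X, ℝ) → C(Y, ℝ) defined by Ψ(f) = Φ(f⁺) − Φ(f⁻) (using the decomposition f = f⁺ − f⁻ with f⁺f⁻ = 0) is a well-defined order isomorphism. -/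
section Stmt14Aux

variable {Z : Type*} [TopologicalSpace Z]

private lemma stmt14_real_le_iff (a b : ℝ) :
    a ≤ b ↔ (a ⊔ 0 ≤ b ⊔ 0 ∧ (-b) ⊔ 0 ≤ (-a) ⊔ 0) := by
  constructor
  · intro h
    exact ⟨sup_le_sup_right h 0, sup_le_sup_right (neg_le_neg h) 0⟩
  · rintro ⟨h1, h2⟩
    have := sub_le_sub h1 h2
    simpa [max_zero_sub_max_neg_zero_eq_self] using this

private lemma stmt14_cm_le_iff (f g : C(Z, ℝ)) :
    f ≤ g ↔ (f ⊔ 0 ≤ g ⊔ 0 ∧ (-g) ⊔ 0 ≤ (-f) ⊔ 0) := by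
  simp only [ContinuousMap.le_def, ContinuousMap.sup_apply, ContinuousMap.neg_apply,
    ContinuousMap.zero_apply]
  constructor
  · intro h
    exact ⟨fun x => ((stmt14_real_le_iff (f x) (g x)).1 (h x)).1,
           fun x => ((stmt14_real_le_iff (f x) (g x)).1 (h x)).2⟩
  · rintro ⟨h1, h2⟩ x
    exact (stmt14_real_le_iff (f x) (g x)).2 ⟨h1 x, h2 x⟩

private lemma stmt14_real_decomp {a b : ℝ} (ha : 0 ≤ a) (hb : 0 ≤ b)
    (h : a ⊓ b = 0) : (a - b) ⊔ 0 = a ∧ (-(a - b)) ⊔ 0 = b := by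
  rcases le_total a b with hle | hle
  · have ha0 : a = 0 := le_antisymm (by rw [← h]; exact le_inf le_rfl hle) ha
    subst ha0
    refine ⟨by rw [sup_eq_right]; linarith, ?_⟩
    rw [show -((0:ℝ)-b) = b by ring, sup_eq_left]; exact hb
  · have hb0 : b = 0 := le_antisymm (by rw [← h]; exact le_inf hle le_rfl) hb
    subst hb0
    refine ⟨?_, by rw [sup_eq_right]; linarith⟩
    rw [show a-(0:ℝ) = a by ring, sup_eq_left]; exact ha

private lemma stmt14_cm_decomp {u v : C(Z, ℝ)} (hu : 0 ≤ u) (hv : 0 ≤ v)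
    (h : u ⊓ v = 0) : (u - v) ⊔ 0 = u ∧ (-(u - v)) ⊔ 0 = v := by
  have hpt : ∀ x, u x ⊓ v x = 0 := by
    intro x
    have := ContinuousMap.congr_fun h x
    simpa using this
  constructor
  · ext x
    simpa using (stmt14_real_decomp (hu x) (hv x) (hpt x)).1
  · ext x
    simpa using (stmt14_real_decomp (hu x) (hv x) (hpt x)).2

private lemma stmt14_pos_inf_neg (f : C(Z, ℝ)) : (f ⊔ 0) ⊓ ((-f) ⊔ 0) = 0 := by
  ext x
  simp only [ContinuousMap.inf_apply, ContinuousMap.sup_apply, ContinuousMap.neg_apply,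
    ContinuousMap.zero_apply]
  rcases le_total (f x) 0 with h | h
  · rw [max_eq_right h, min_eq_left (le_max_of_le_right (by linarith))]
  · rw [max_eq_right (by linarith : -f x ≤ 0), min_eq_right (le_max_of_le_right le_rfl)]

end Stmt14Aux

/-- an order isomorphism `Φ` between the cones of nonnegative continuous
functions on compact Hausdorff spaces `X` and `Y` induces a well-defined order isomorphism
`Ψ(f) = Φ(f⁺) − Φ(f⁻)` between `C(X, ℝ)` and `C(Y, ℝ)`. -/
theorem stmt14 {X Y : Type*} [TopologicalSpace X] [CompactSpace X] [T2Space X]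
    [TopologicalSpace Y] [CompactSpace Y] [T2Space Y]
    (Φ : {f : C(X, ℝ) // 0 ≤ f} → {g : C(Y, ℝ) // 0 ≤ g})
    (hbij : Function.Bijective Φ)
    (hord : ∀ f g : {f : C(X, ℝ) // 0 ≤ f}, f ≤ g ↔ Φ f ≤ Φ g) :
    Function.Bijective (fun f : C(X, ℝ) =>
      (Φ ⟨f ⊔ 0, le_sup_right⟩ : {g : C(Y, ℝ) // 0 ≤ g}).1 -
        (Φ ⟨(-f) ⊔ 0, le_sup_right⟩ : {g : C(Y, ℝ) // 0 ≤ g}).1) ∧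
    ∀ f g : C(X, ℝ), f ≤ g ↔
      (Φ ⟨f ⊔ 0, le_sup_right⟩ : {g : C(Y, ℝ) // 0 ≤ g}).1 -
          (Φ ⟨(-f) ⊔ 0, le_sup_right⟩ : {g : C(Y, ℝ) // 0 ≤ g}).1 ≤
        (Φ ⟨g ⊔ 0, le_sup_right⟩ : {g : C(Y, ℝ) // 0 ≤ g}).1 -
          (Φ ⟨(-g) ⊔ 0, le_sup_right⟩ : {g : C(Y, ℝ) // 0 ≤ g}).1 := by
  classical
  set e := Equiv.ofBijective Φ hbij with he
  -- subtype order is the ambient order on values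
  have hsub_le : ∀ a b : {f : C(X, ℝ) // 0 ≤ f}, a ≤ b ↔ a.1 ≤ b.1 := fun a b => Iff.rfl
  have hsub_leY : ∀ a b : {g : C(Y, ℝ) // 0 ≤ g}, a ≤ b ↔ a.1 ≤ b.1 := fun a b => Iff.rfl
  -- Φ sends 0 to 0
  have hΦ0 : (Φ ⟨0, le_refl 0⟩).1 = 0 := by
    set z := e.symm ⟨0, le_refl 0⟩ with hz
    have hΦz : Φ z = ⟨0, le_refl 0⟩ := e.apply_symm_apply _
    have h0z : (⟨0, le_refl 0⟩ : {f : C(X, ℝ) // 0 ≤ f}) ≤ z := z.2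
    have := (hord _ _).1 h0z
    rw [hΦz] at this
    exact le_antisymm this (Φ ⟨0, le_refl 0⟩).2
  -- Φ preserves infs (computed in the ambient lattice)
  have hΦinf : ∀ a b : {f : C(X, ℝ) // 0 ≤ f},
      (Φ ⟨a.1 ⊓ b.1, le_inf a.2 b.2⟩).1 = (Φ a).1 ⊓ (Φ b).1 := by
    intro a b
    apply le_antisymm
    · apply le_inf
      · exact (hord _ a).1 (inf_le_left (b := b.1))
      · exact (hord _ b).1 (inf_le_right (a := a.1))
    · set w : {g : C(Y, ℝ) // 0 ≤ g} := ⟨(Φ a).1 ⊓ (Φ b).1, le_inf (Φ a).2 (Φ b).2⟩ with hw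
      set c := e.symm w with hc
      have hΦc : Φ c = w := e.apply_symm_apply _
      have hca : c ≤ a := (hord c a).2 (by rw [hΦc]; exact inf_le_left (b := (Φ b).1))
      have hcb : c ≤ b := (hord c b).2 (by rw [hΦc]; exact inf_le_right (a := (Φ a).1))
      have : c ≤ (⟨a.1 ⊓ b.1, le_inf a.2 b.2⟩ : {f : C(X, ℝ) // 0 ≤ f}) :=
        (hsub_le _ _).2 (le_inf ((hsub_le c a).1 hca) ((hsub_le c b).1 hcb))
      have := (hord _ _).1 this
      rw [hΦc] at this
      exact this
  -- key: the images of positive and negative parts are disjoint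
  have hdisj : ∀ f : C(X, ℝ),
      (Φ ⟨f ⊔ 0, le_sup_right⟩).1 ⊓ (Φ ⟨(-f) ⊔ 0, le_sup_right⟩).1 = 0 := by
    intro f
    have h1 := hΦinf ⟨f ⊔ 0, le_sup_right⟩ ⟨(-f) ⊔ 0, le_sup_right⟩
    have h2 : (⟨(f ⊔ 0) ⊓ ((-f) ⊔ 0), le_inf le_sup_right le_sup_right⟩ :
        {f : C(X, ℝ) // 0 ≤ f}) = ⟨0, le_refl 0⟩ := Subtype.ext (stmt14_pos_inf_neg f)
    rw [h2, hΦ0] at h1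
    exact h1.symm
  -- Ψ and its decomposition
  set Ψ : C(X, ℝ) → C(Y, ℝ) := fun f =>
    (Φ ⟨f ⊔ 0, le_sup_right⟩).1 - (Φ ⟨(-f) ⊔ 0, le_sup_right⟩).1 with hΨ
  have hΨdecomp : ∀ f : C(X, ℝ),
      (Ψ f) ⊔ 0 = (Φ ⟨f ⊔ 0, le_sup_right⟩).1 ∧
      (-(Ψ f)) ⊔ 0 = (Φ ⟨(-f) ⊔ 0, le_sup_right⟩).1 := fun f =>
    stmt14_cm_decomp (Φ _).2 (Φ _).2 (hdisj f)
  -- the order characterization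
  have horder : ∀ f g : C(X, ℝ), f ≤ g ↔ Ψ f ≤ Ψ g := by
    intro f g
    rw [stmt14_cm_le_iff f g, stmt14_cm_le_iff (Ψ f) (Ψ g),
      (hΨdecomp f).1, (hΨdecomp f).2, (hΨdecomp g).1, (hΨdecomp g).2]
    constructor
    · rintro ⟨h1, h2⟩
      exact ⟨(hord ⟨f ⊔ 0, le_sup_right⟩ ⟨g ⊔ 0, le_sup_right⟩).1 h1,
             (hord ⟨(-g) ⊔ 0, le_sup_right⟩ ⟨(-f) ⊔ 0, le_sup_right⟩).1 h2⟩
    · rintro ⟨h1, h2⟩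
      exact ⟨(hord ⟨f ⊔ 0, le_sup_right⟩ ⟨g ⊔ 0, le_sup_right⟩).2 h1,
             (hord ⟨(-g) ⊔ 0, le_sup_right⟩ ⟨(-f) ⊔ 0, le_sup_right⟩).2 h2⟩
  refine ⟨⟨?_, ?_⟩, horder⟩
  · -- injective
    intro f g hfg
    exact le_antisymm ((horder f g).2 (le_of_eq hfg)) ((horder g f).2 (le_of_eq hfg.symm))
  · -- surjective
    intro h
    set u := e.symm ⟨h ⊔ 0, le_sup_right⟩ with hu
    set v := e.symm ⟨(-h) ⊔ 0, le_sup_right⟩ with hv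
    have hΦu : Φ u = ⟨h ⊔ 0, le_sup_right⟩ := e.apply_symm_apply _
    have hΦv : Φ v = ⟨(-h) ⊔ 0, le_sup_right⟩ := e.apply_symm_apply _
    have huv : u.1 ⊓ v.1 = 0 := by
      have h1 := hΦinf u v
      rw [hΦu, hΦv] at h1
      have h2 : (Φ ⟨u.1 ⊓ v.1, le_inf u.2 v.2⟩).1 = (Φ ⟨0, le_refl 0⟩).1 := by
        rw [h1, hΦ0]; exact stmt14_pos_inf_neg h
      have h3 : (⟨u.1 ⊓ v.1, le_inf u.2 v.2⟩ : {f : C(X, ℝ) // 0 ≤ f}) = ⟨0, le_refl 0⟩ :=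
        hbij.1 (Subtype.ext h2)
      simpa using congrArg Subtype.val h3
    refine ⟨u.1 - v.1, ?_⟩
    obtain ⟨hd1, hd2⟩ := stmt14_cm_decomp u.2 v.2 huv
    have e1 : (⟨(u.1 - v.1) ⊔ 0, le_sup_right⟩ : {f : C(X, ℝ) // 0 ≤ f}) = u :=
      Subtype.ext hd1
    have e2 : (⟨(-(u.1 - v.1)) ⊔ 0, le_sup_right⟩ : {f : C(X, ℝ) // 0 ≤ f}) = v :=
      Subtype.ext hd2
    show (Φ ⟨(u.1 - v.1) ⊔ 0, le_sup_right⟩).1 - (Φ ⟨(-(u.1 - v.1)) ⊔ 0, le_sup_right⟩).1 = h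
    rw [e1, e2, hΦu, hΦv]
    ext x
    simp [max_zero_sub_max_neg_zero_eq_self]
end
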